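/- Let (G,*) be a group, k ≥ 1 and 1 ≤ m ≤ k. Suppose f_n : G^{k+1} → G (n ≥ 0), h : G^{k−m+1} → G and g_n : G^m → G (n ≥ 0) satisfy the semiconjugacy identity f_n(u_0,…,u_k) * h(u_0,…,u_{k−m}) = g_n(u_0 * h(u_1,…,u_{k−m+1}), u_1 * h(u_2,…,u_{k−m+2}), …, u_{m−1} * h(u_m,…,u_k)) for all u_0,…,u_k ∈ G and all n ≥ 0. Suppose sequences {t_n}_{n ≥ −m+1} and {y_n}_{n ≥ −k} in G satisfy t_{n+1} = g_n(t_n, t_{n−1}, …, t_{n−m+1}) for all n ≥ 0 and y_n = t_n * [h(y_{n−1}, y_{n−2}, …, y_{n−k+m−1})]^{-1} for all n ≥ −m+1. Then y_{n+1} = f_n(y_n, y_{n−1}, …, y_{n−k}) for every n ≥ 0. -/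
import Mathlib


/-- If the semiconjugacy identity holds and sequences `t, y` satisfy
the factor equation and the cofactor equation, then `y` is a solution of the original
difference equation `y_{n+1} = f_n(y_n, …, y_{n-k})` for all `n ≥ 0`. -/
theorem stmt_1 {G : Type*} [Group G] (k m : ℕ) (hk : 1 ≤ k) (hm1 : 1 ≤ m) (hmk : m ≤ k)
    (f : ℕ → (Fin (k + 1) → G) → G)
    (h : (Fin (k - m + 1) → G) → G)
    (g : ℕ → (Fin m → G) → G)
    (hsc : ∀ (n : ℕ) (u : Fin (k + 1) → G),
      f n u * h (fun i => u ⟨i.val, by have := i.isLt; omega⟩) =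
        g n (fun j => u ⟨j.val, by have := j.isLt; omega⟩ *
          h (fun i => u ⟨j.val + 1 + i.val, by have := i.isLt; have := j.isLt; omega⟩)))
    (t : ℤ → G) (y : ℤ → G)
    (htfac : ∀ n : ℕ, t ((n : ℤ) + 1) = g n (fun j => t ((n : ℤ) - j.val)))
    (hyco : ∀ n : ℤ, -(m : ℤ) + 1 ≤ n →
      y n = t n * (h (fun i => y (n - 1 - i.val)))⁻¹) :
    ∀ n : ℕ, y ((n : ℤ) + 1) = f n (fun i => y ((n : ℤ) - i.val)) := by
  intro n
  have key := hsc n (fun i => y ((n : ℤ) - i.val))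
  simp only at key
  -- rewrite RHS of key
  have e1 : (fun j : Fin m => y ((n:ℤ) - j.val) *
      h (fun i => y ((n:ℤ) - ((j.val + 1 + i.val : ℕ) : ℤ)))) = fun j => t ((n:ℤ) - j.val) := by
    funext j
    have hy := hyco ((n:ℤ) - j.val) (by have := j.isLt; omega)
    have harg : (fun i : Fin (k - m + 1) => y ((n:ℤ) - j.val - 1 - i.val)) =
        fun i => y ((n:ℤ) - ((j.val + 1 + i.val : ℕ) : ℤ)) := by
      funext i
      congr 1
      push_cast
      ring
    rw [hy, harg, inv_mul_cancel_right]
  rw [e1, ← htfac n] at key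
  have hy1 := hyco ((n:ℤ) + 1) (by omega)
  have harg2 : (fun i : Fin (k - m + 1) => y ((n:ℤ) + 1 - 1 - i.val)) =
      fun i => y ((n:ℤ) - i.val) := by
    funext i
    congr 1
    ring
  rw [harg2] at hy1
  rw [hy1, ← key, mul_inv_cancel_right]
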